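/- Let f : ℝ³ → ℂ be locally integrable and let u_f(t,x) := (t/4π) ∫_{S²} f(x + tω) dσ(ω) be the free sine wave propagator applied to f. Then for every x ∈ ℝ³, ∫_0^∞ |u_f(t,x)| dt ≤ (1/4π) ∫_{ℝ³} |f(y)|/|x−y| dy. Consequently sup_{x ∈ ℝ³} ∫_0^∞ |u_f(t,x)| dt ≤ (1/4π) ‖f‖_K, the reversed space-time estimate ‖ sin(t√(−Δ))/√(−Δ) f ‖_{L^∞_x L¹_t} ≲ ‖f‖_K. -/

import Mathlib

/-!
Write `y = x + tω` in polar coordinates around `x`. Since `dy = t² dt dσ(ω)`, the weight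
`1/|x - y| = 1/t` turns Lebesgue measure into `t dt dσ(ω)`, which is exactly the factor `t` in
Kirchhoff's formula. Bounding `|u_f(t,x)|` by `(t/4π) ∫ |f(x + tω)| dσ(ω)` and integrating in `t`
therefore gives `(1/4π) ∫ |f(y)|/|x - y| dy`, and this is at most `(1/4π) ‖f‖_K`.
-/

set_option autoImplicit false

open MeasureTheory ENNReal Real

noncomputable section

/-- `ℝ³` as a Euclidean space. -/
abbrev R3 : Type := EuclideanSpace ℝ (Fin 3)

/-- The surface measure on the unit sphere `S² ⊂ ℝ³`. -/
def sphereMeasure : Measure (Metric.sphere (0 : R3) 1) :=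
  (volume : Measure R3).toSphere

/-- The free sine wave propagator (Kirchhoff formula):
`u_f(t,x) = (t/4π) ∫_{S²} f(x + tω) dσ(ω)`. -/
def sinProp (f : R3 → ℂ) (t : ℝ) (x : R3) : ℂ :=
  (t / (4 * π)) • ∫ ω : Metric.sphere (0 : R3) 1, f (x + t • (ω : R3)) ∂sphereMeasure

/-- The (global) Kato norm of a function `V` on `ℝ³`:
`‖V‖_K = sup_y ∫ |V(x)| / |x - y| dx`. -/
def katoNorm {E : Type*} [NormedAddCommGroup E] (V : R3 → E) : ℝ≥0∞ :=
  ⨆ y : R3, ∫⁻ x : R3, (‖V x‖₊ : ℝ≥0∞) / (‖x - y‖₊ : ℝ≥0∞)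

open Set Metric

namespace MeasureTheory

theorem lintegral_volumeIoiPow (n : ℕ) (g : ℝ → ℝ≥0∞) :
    ∫⁻ r, g r ∂Measure.volumeIoiPow n = ∫⁻ t in Ioi 0, ENNReal.ofReal (t ^ n) * g t := by
  rw [Measure.volumeIoiPow, lintegral_withDensity_eq_lintegral_mul_non_measurable _
    (measurable_subtype_coe.pow_const n).ennreal_ofReal (.of_forall fun _ => ENNReal.ofReal_lt_top)]
  exact lintegral_subtype_comap measurableSet_Ioi fun t => ENNReal.ofReal (t ^ n) * g t

variable {E : Type*} [NormedAddCommGroup E] [NormedSpace ℝ E] [MeasurableSpace E] [BorelSpace E]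

theorem measurableEmbedding_smul_unitSphere :
    MeasurableEmbedding fun p : sphere (0 : E) 1 × Ioi (0 : ℝ) => (p.2 : ℝ) • (p.1 : E) := by
  have := (MeasurableEmbedding.subtype_coe (measurableSet_singleton (0 : E)).compl).comp
    (homeomorphUnitSphereProd E).symm.measurableEmbedding
  convert this using 1
  ext p
  simp [homeomorphUnitSphereProd]

variable [FiniteDimensional ℝ E] (μ : Measure E) [μ.IsAddHaarMeasure]

theorem measurePreserving_smul_unitSphere [Nontrivial E] :
    MeasurePreserving (fun p : sphere (0 : E) 1 × Ioi (0 : ℝ) => (p.2 : ℝ) • (p.1 : E))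
      (μ.toSphere.prod (Measure.volumeIoiPow (Module.finrank ℝ E - 1))) μ := by
  have := (measurePreserving_subtype_coe (μa := μ) (measurableSet_singleton (0 : E)).compl).comp
    (MeasurePreserving.symm (homeomorphUnitSphereProd E).toMeasurableEquiv
      μ.measurePreserving_homeomorphUnitSphereProd)
  rw [restrict_compl_singleton] at this
  convert this using 1
  ext p
  simp [homeomorphUnitSphereProd]

theorem lintegral_eq_lintegral_Ioi_toSphere [Nontrivial E] (F : E → ℝ≥0∞) (hF : AEMeasurable F μ) :
    ∫⁻ x, F x ∂μ = ∫⁻ t in Ioi 0,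
      ENNReal.ofReal (t ^ (Module.finrank ℝ E - 1)) * ∫⁻ ω, F (t • (ω : E)) ∂μ.toSphere := by
  have hpolar := measurePreserving_smul_unitSphere μ
  have hmeas : AEMeasurable (fun p : sphere (0 : E) 1 × Ioi (0 : ℝ) => F ((p.2 : ℝ) • (p.1 : E)))
      (μ.toSphere.prod (Measure.volumeIoiPow (Module.finrank ℝ E - 1))) :=
    hF.comp_quasiMeasurePreserving hpolar.quasiMeasurePreserving
  rw [← hpolar.lintegral_comp_emb measurableEmbedding_smul_unitSphere F,
    lintegral_prod_symm _ hmeas]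
  exact lintegral_volumeIoiPow _ fun t => ∫⁻ ω, F (t • (ω : E)) ∂μ.toSphere

theorem lintegral_div_enorm_eq_lintegral_Ioi_toSphere (hE : 2 ≤ Module.finrank ℝ E)
    (F : E → ℝ≥0∞) (hF : AEMeasurable F μ) :
    ∫⁻ x, F x / ‖x‖ₑ ∂μ = ∫⁻ t in Ioi 0,
      ENNReal.ofReal (t ^ (Module.finrank ℝ E - 2)) * ∫⁻ ω, F (t • (ω : E)) ∂μ.toSphere := by
  have : Nontrivial E := Module.finrank_pos_iff (R := ℝ).1 (by omega)
  rw [lintegral_eq_lintegral_Ioi_toSphere μ (fun x => F x / ‖x‖ₑ)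
    (hF.div measurable_enorm.aemeasurable)]
  refine setLIntegral_congr_fun measurableSet_Ioi fun t (ht : 0 < t) => ?_
  have hnorm (ω : sphere (0 : E) 1) : ‖t • (ω : E)‖ₑ = ENNReal.ofReal t := by
    rw [← ofReal_norm, norm_smul, norm_eq_of_mem_sphere, mul_one, Real.norm_of_nonneg ht.le]
  have hpow : t ^ (Module.finrank ℝ E - 1) = t ^ (Module.finrank ℝ E - 2) * t := by
    rw [← pow_succ]; congr 1; omega
  have ht₀ : ENNReal.ofReal t ≠ 0 := (ENNReal.ofReal_pos.2 ht).ne'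
  simp only [hnorm, div_eq_mul_inv]
  rw [lintegral_mul_const' _ _ (ENNReal.inv_ne_top.2 ht₀), hpow,
    ENNReal.ofReal_mul (by positivity)]
  calc _ = ENNReal.ofReal (t ^ (Module.finrank ℝ E - 2)) * (∫⁻ ω, F (t • (ω : E)) ∂μ.toSphere) *
        (ENNReal.ofReal t * (ENNReal.ofReal t)⁻¹) := by ring
    _ = _ := by rw [ENNReal.mul_inv_cancel ht₀ ENNReal.ofReal_ne_top, mul_one]

end MeasureTheory

theorem enorm_sinProp_le (f : R3 → ℂ) (x : R3) {t : ℝ} (ht : 0 ≤ t) :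
    ‖sinProp f t x‖ₑ ≤ (ENNReal.ofReal (4 * π))⁻¹ *
      (ENNReal.ofReal t * ∫⁻ ω, ‖f (x + t • (ω : R3))‖ₑ ∂sphereMeasure) := by
  have h4π : 0 < 4 * π := by positivity
  rw [sinProp, enorm_smul, Real.enorm_of_nonneg (div_nonneg ht h4π.le),
    ENNReal.ofReal_div_of_pos h4π, ENNReal.div_eq_inv_mul, mul_assoc]
  gcongr
  exact enorm_integral_le_lintegral_enorm _

theorem lintegral_enorm_sinProp_le {f : R3 → ℂ} (hf : AEStronglyMeasurable f volume) (x : R3) :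
    ∫⁻ t in Ioi 0, ‖sinProp f t x‖ₑ ≤
      (ENNReal.ofReal (4 * π))⁻¹ * ∫⁻ y, ‖f y‖ₑ / ‖x - y‖ₑ := by
  have hshift : AEMeasurable (fun z => ‖f (x + z)‖ₑ) (volume : Measure R3) :=
    hf.enorm.comp_quasiMeasurePreserving
      (measurePreserving_add_left volume x).quasiMeasurePreserving
  calc ∫⁻ t in Ioi 0, ‖sinProp f t x‖ₑ
      ≤ ∫⁻ t in Ioi 0, (ENNReal.ofReal (4 * π))⁻¹ *
          (ENNReal.ofReal t * ∫⁻ ω, ‖f (x + t • (ω : R3))‖ₑ ∂sphereMeasure) :=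
        setLIntegral_mono' measurableSet_Ioi fun t ht => enorm_sinProp_le f x (le_of_lt ht)
    _ = (ENNReal.ofReal (4 * π))⁻¹ * ∫⁻ z, ‖f (x + z)‖ₑ / ‖z‖ₑ := by
        rw [lintegral_const_mul' _ _ (ENNReal.inv_ne_top.2 (by positivity)),
          lintegral_div_enorm_eq_lintegral_Ioi_toSphere volume (by simp) _ hshift]
        simp [sphereMeasure]
    _ = (ENNReal.ofReal (4 * π))⁻¹ * ∫⁻ y, ‖f y‖ₑ / ‖x - y‖ₑ := by
        rw [← lintegral_add_left_eq_self (fun y => ‖f y‖ₑ / ‖x - y‖ₑ) x]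
        simp

theorem lintegral_div_enorm_sub_le_katoNorm {E : Type*} [NormedAddCommGroup E] (V : R3 → E)
    (x : R3) : ∫⁻ y, ‖V y‖ₑ / ‖x - y‖ₑ ≤ katoNorm V := by
  simp_rw [enorm_sub_rev x]
  exact le_iSup (fun y => ∫⁻ z, ‖V z‖ₑ / ‖z - y‖ₑ) x

theorem sine_reversed_Linfty_L1_kato (f : R3 → ℂ) (hf : LocallyIntegrable f volume) :
    (∀ x : R3,
      ∫⁻ t in Set.Ioi (0 : ℝ), (‖sinProp f t x‖₊ : ℝ≥0∞) ≤
        (ENNReal.ofReal (4 * π))⁻¹ * ∫⁻ y : R3, (‖f y‖₊ : ℝ≥0∞) / (‖x - y‖₊ : ℝ≥0∞)) ∧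
    (⨆ x : R3, ∫⁻ t in Set.Ioi (0 : ℝ), (‖sinProp f t x‖₊ : ℝ≥0∞)) ≤
      (ENNReal.ofReal (4 * π))⁻¹ * katoNorm f := by
  have hpointwise := lintegral_enorm_sinProp_le hf.aestronglyMeasurable
  exact ⟨hpointwise, iSup_le fun x =>
    (hpointwise x).trans (mul_le_mul_right (lintegral_div_enorm_sub_le_katoNorm f x) _)⟩
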